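/- Let G be a group, V a rational vector space, and κ : G → V a map satisfying κ(1) = 0, κ(g x g⁻¹) = κ(x), and κ(xy) + κ(x y⁻¹) = 2κ(x) + 2κ(y) for all g, x, y ∈ G, extended ℚ-linearly to ℚ[G]. Suppose G is generated by x₁, …, x_M. Then the image of κ on ℚ[G] is contained in the ℚ-linear span of the elements κ(x_i), κ((x_i−1)(x_j−1)) for i ≤ j, and κ((x_i−1)(x_j−1)(x_k−1)) for i < j < k. -/

import Mathlib

/-!
Let `ε` be the augmentation and `δ g = g - 1`. The parallelogram law says exactly that
`κ (w * (h + h⁻¹ - 2)) = 2 ε(w) κ(h)`, so `h ↦ κ (w * δ h)` is odd whenever `ε w = 0`. Since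
`δ (g h) = δ g + δ h + δ g δ h`, the defect of this odd function is `κ (w * δ g * δ h)`, and
comparing the expansions of `g h` and of its inverse `h⁻¹ g⁻¹` (using that `κ` is a trace) shows
that this defect is antisymmetric in `g, h`. Hence triple products `κ (δ a δ b δ c)` are
alternating and quadruple products vanish, so triple products are additive in each variable,
pair products are additive up to triple products, and `κ ∘ of` is additive up to pair products.
Inducting over words in the generators then expresses every `κ (of g)` through the listed values.
-/

open MonoidAlgebra

noncomputable def augmentation (k G : Type*) [CommSemiring k] [Monoid G] :
    MonoidAlgebra k G →ₐ[k] k :=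
  MonoidAlgebra.lift k k G 1

theorem forall_mem_of_map_mul_sub_mem {G V ι σ : Type*} [Group G] [AddCommGroup V] [SetLike σ V]
    [AddSubgroupClass σ V] {x : ι → G} (hgen : Subgroup.closure (Set.range x) = ⊤) {S : σ}
    {f : G → V} (hf : ∀ g h, f (g * h) - f g - f h ∈ S) (hx : ∀ i, f (x i) ∈ S) (g : G) :
    f g ∈ S := by
  have hone : f 1 ∈ S := by simpa using neg_mem (hf 1 1)
  refine Subgroup.closure_induction (p := fun g _ => f g ∈ S) (by rintro _ ⟨i, rfl⟩; exact hx i)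
    hone (fun g h _ _ hg hh => by convert add_mem (hf g h) (add_mem hg hh) using 1; abel)
    (fun g _ hg => by simpa using sub_mem (sub_mem hone hg) (hf g g⁻¹))
    (hgen ▸ Subgroup.mem_top g)

theorem mem_of_sorted_of_alternating {V ι σ : Type*} [AddCommGroup V] [LinearOrder ι]
    [SetLike σ V] [AddSubgroupClass σ V] {S : σ} {t : ι → ι → ι → V}
    (hrot : ∀ i j l, t i j l = t l i j) (hswap : ∀ i j l, t i j l = -t i l j)
    (hzero : ∀ i j, t i j j = 0)
    (hsorted : ∀ i j l, i < j → j < l → t i j l ∈ S) (i j l : ι) : t i j l ∈ S := by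
  have sorted {i j l : ι} (hij : i ≤ j) (hjl : j ≤ l) : t i j l ∈ S := by
    rcases hij.lt_or_eq with hij | rfl
    · rcases hjl.lt_or_eq with hjl | rfl
      · exact hsorted i j l hij hjl
      · rw [hzero]; exact zero_mem S
    · rw [hrot, hzero]; exact zero_mem S
  have first_le {i j l : ι} (hij : i ≤ j) : t i j l ∈ S := by
    rcases le_total j l with hjl | hlj
    · exact sorted hij hjl
    rcases le_total i l with hil | hli
    · rw [hswap]; exact neg_mem (sorted hil hlj)
    · rw [hrot]; exact sorted hli hij
  rcases le_total i j with hij | hji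
  · exact first_le hij
  · rw [hswap, hrot]; exact neg_mem (first_le hji)

section

variable {k G V : Type*} [CommRing k] [Group G] [AddCommGroup V] [Module k V]

local notation "δ" g:max => (of k G g - 1 : MonoidAlgebra k G)

theorem augmentation_of (g : G) : augmentation k G (of k G g) = 1 := by
  simp [augmentation]

theorem augmentation_of_sub_one (g : G) : augmentation k G (δ g) = 0 := by
  rw [map_sub, augmentation_of, map_one, sub_self]

theorem of_mul_sub_one (g h : G) : δ (g * h) = δ g + δ h + δ g * δ h := by
  simp only [map_mul]
  noncomm_ring

def IsConjInvariant (κ : MonoidAlgebra k G →ₗ[k] V) : Prop :=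
  ∀ g x : G, κ (of k G (g * x * g⁻¹)) = κ (of k G x)

def SatisfiesParallelogramLaw (κ : MonoidAlgebra k G →ₗ[k] V) : Prop :=
  ∀ x y : G, κ (of k G (x * y)) + κ (of k G (x * y⁻¹))
    = (2 : k) • κ (of k G x) + (2 : k) • κ (of k G y)

variable {κ : MonoidAlgebra k G →ₗ[k] V}

theorem map_single_eq_smul (g : G) (r : k) : κ (single g r) = r • κ (of k G g) := by
  rw [of_apply, ← map_smul, smul_single', mul_one]

theorem IsConjInvariant.map_mul_comm (hκ : IsConjInvariant κ) (u v : MonoidAlgebra k G) :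
    κ (u * v) = κ (v * u) := by
  induction u using induction_linear with
  | zero => simp
  | add u u' hu hu' => simp only [add_mul, mul_add, map_add, hu, hu']
  | single g r =>
    induction v using induction_linear with
    | zero => simp
    | add v v' hv hv' => simp only [add_mul, mul_add, map_add, hv, hv']
    | single h s =>
      have hgh : g * (h * g) * g⁻¹ = g * h := by group
      rw [single_mul_single, single_mul_single, map_single_eq_smul, map_single_eq_smul,
        mul_comm r s, ← hκ g (h * g), hgh]

theorem map_mul_of_mul_sub_one (u : MonoidAlgebra k G) (g h : G) :
    κ (u * δ (g * h)) - κ (u * δ g) - κ (u * δ h) = κ (u * δ g * δ h) := by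
  rw [of_mul_sub_one, mul_add, mul_add, map_add, map_add, mul_assoc]
  abel

theorem SatisfiesParallelogramLaw.map_mul_of_add_of_inv_sub_two (hκ : SatisfiesParallelogramLaw κ)
    (w : MonoidAlgebra k G) (h : G) :
    κ (w * (of k G h + of k G h⁻¹ - 2)) = (2 * augmentation k G w) • κ (of k G h) := by
  induction w using induction_linear with
  | zero => simp
  | add w w' hw hw' => simp only [add_mul, map_add, hw, hw', mul_add, add_smul]
  | single g r =>
    have hsingle : single g r = r • of k G g := by rw [of_apply, smul_single', mul_one]
    have hrel := hκ g h
    rw [hsingle, smul_mul_assoc, map_smul, mul_sub, mul_add, ← map_mul, ← map_mul, mul_two,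
      map_sub, map_add, map_add, hrel, map_smul, augmentation_of, smul_eq_mul, mul_one]
    module

theorem SatisfiesParallelogramLaw.map_mul_of_inv_sub_one (hκ : SatisfiesParallelogramLaw κ)
    {w : MonoidAlgebra k G} (hw : augmentation k G w = 0) (h : G) :
    κ (w * δ h⁻¹) = -κ (w * δ h) := by
  have hvanish := hκ.map_mul_of_add_of_inv_sub_two w h
  rw [hw, mul_zero, zero_smul] at hvanish
  rw [eq_neg_iff_add_eq_zero, ← map_add, ← mul_add, ← hvanish, ← one_add_one_eq_two,
    sub_add_sub_comm, add_comm (of k G h⁻¹)]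

theorem map_mul_antisymm (hconj : IsConjInvariant κ) (hrel : SatisfiesParallelogramLaw κ)
    {w : MonoidAlgebra k G} (hw : augmentation k G w = 0) (g h : G) :
    κ (w * δ g * δ h) = -κ (w * δ h * δ g) := by
  have hodd := hrel.map_mul_of_inv_sub_one hw
  have hinv : κ (w * δ h⁻¹ * δ g⁻¹) = κ (w * δ h * δ g) := by
    have hw' : augmentation k G (δ g * w) = 0 := by rw [map_mul, hw, mul_zero]
    have hw'' : augmentation k G (w * δ h⁻¹) = 0 := by rw [map_mul, hw, zero_mul]
    calc κ (w * δ h⁻¹ * δ g⁻¹) = -κ (δ g * w * δ h⁻¹) := by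
          rw [hrel.map_mul_of_inv_sub_one hw'' g, hconj.map_mul_comm, mul_assoc]
      _ = κ (w * δ h * δ g) := by
          rw [hrel.map_mul_of_inv_sub_one hw' h, neg_neg, mul_assoc, hconj.map_mul_comm]
  have hexp := map_mul_of_mul_sub_one (κ := κ) w g h
  have hexp_inv := map_mul_of_mul_sub_one (κ := κ) w h⁻¹ g⁻¹
  rw [← mul_inv_rev, hodd, hodd, hodd, hinv] at hexp_inv
  linear_combination (norm := module) -(hexp + hexp_inv)

theorem map_triple_antisymm (hconj : IsConjInvariant κ) (hrel : SatisfiesParallelogramLaw κ)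
    (a b c : G) : κ (δ a * δ b * δ c) = -κ (δ a * δ c * δ b) :=
  map_mul_antisymm hconj hrel (augmentation_of_sub_one a) b c

theorem IsConjInvariant.map_triple_rotate (hconj : IsConjInvariant κ) (a b c : G) :
    κ (δ a * δ b * δ c) = κ (δ c * δ a * δ b) := by
  rw [hconj.map_mul_comm, ← mul_assoc]

variable [IsAddTorsionFree V]

theorem map_quadruple_eq_zero (hconj : IsConjInvariant κ) (hrel : SatisfiesParallelogramLaw κ)
    (a b c d : G) : κ (δ a * δ b * δ c * δ d) = 0 := by
  have swap : ∀ a b c d : G, κ (δ a * δ b * δ c * δ d) = -κ (δ a * δ b * δ d * δ c) :=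
    fun a b c d => map_mul_antisymm hconj hrel
      (by rw [map_mul, augmentation_of_sub_one, zero_mul]) c d
  have rotate : ∀ a b c d : G, κ (δ a * δ b * δ c * δ d) = κ (δ d * δ a * δ b * δ c) :=
    fun a b c d => by rw [hconj.map_mul_comm]; simp only [mul_assoc]
  have swap12 : ∀ a b c d : G, κ (δ a * δ b * δ c * δ d) = -κ (δ b * δ a * δ c * δ d) :=
    fun a b c d => by rw [rotate, rotate, swap, rotate, rotate]
  -- invariant under the 4-cycle `rotate`, yet alternating: a 4-cycle is an odd permutation
  refine self_eq_neg.mp ?_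
  calc κ (δ a * δ b * δ c * δ d) = -κ (δ a * δ d * δ b * δ c) := by rw [rotate, swap12]
    _ = -κ (δ d * δ b * δ c * δ a) := by rw [← rotate d b c a]
    _ = κ (δ b * δ a * δ c * δ d) := by rw [swap, neg_neg, ← rotate]
    _ = -κ (δ a * δ b * δ c * δ d) := swap12 ..

theorem map_triple_self_right (hconj : IsConjInvariant κ) (hrel : SatisfiesParallelogramLaw κ)
    (a b : G) : κ (δ a * δ b * δ b) = 0 :=
  self_eq_neg.mp (map_triple_antisymm hconj hrel a b b)

theorem map_triple_mul_right (hconj : IsConjInvariant κ) (hrel : SatisfiesParallelogramLaw κ)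
    (a b c d : G) :
    κ (δ a * δ b * δ (c * d)) - κ (δ a * δ b * δ c) - κ (δ a * δ b * δ d) = 0 := by
  rw [map_mul_of_mul_sub_one, map_quadruple_eq_zero hconj hrel]

section Generators

variable {ι : Type*} {x : ι → G} {S : Submodule k V}

theorem map_triple_mem_of_generators (hgen : Subgroup.closure (Set.range x) = ⊤)
    (hconj : IsConjInvariant κ) (hrel : SatisfiesParallelogramLaw κ)
    (htriple : ∀ i j l, κ (δ (x i) * δ (x j) * δ (x l)) ∈ S)
    (a b c : G) : κ (δ a * δ b * δ c) ∈ S := by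
  have extend (a b : G) (hx : ∀ i, κ (δ a * δ b * δ (x i)) ∈ S) (c : G) :
      κ (δ a * δ b * δ c) ∈ S :=
    forall_mem_of_map_mul_sub_mem hgen (f := fun c => κ (δ a * δ b * δ c))
      (fun g h => by rw [map_triple_mul_right hconj hrel]; exact S.zero_mem) hx c
  have hrot := hconj.map_triple_rotate
  have last_free (i j : ι) (c : G) : κ (δ (x i) * δ (x j) * δ c) ∈ S := extend _ _ (htriple i j) c
  have first_fixed (i : ι) (b c : G) : κ (δ (x i) * δ b * δ c) ∈ S := by
    rw [hrot]
    exact extend _ _ (fun j => by rw [← hrot]; exact last_free i j c) b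
  rw [hrot, hrot]
  exact extend _ _ (fun i => by rw [← hrot, ← hrot]; exact first_fixed i b c) a

theorem map_mem_of_generators (hgen : Subgroup.closure (Set.range x) = ⊤)
    (h1 : κ (of k G 1) = 0) (hconj : IsConjInvariant κ) (hrel : SatisfiesParallelogramLaw κ)
    (hsingle : ∀ i, κ (of k G (x i)) ∈ S) (hpair : ∀ i j, κ (δ (x i) * δ (x j)) ∈ S)
    (htriple : ∀ i j l, κ (δ (x i) * δ (x j) * δ (x l)) ∈ S) (a : MonoidAlgebra k G) :
    κ a ∈ S := by
  have extend (f : G → V) (hf : ∀ g h, f (g * h) - f g - f h ∈ S) (hx : ∀ i, f (x i) ∈ S) :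
      ∀ g, f g ∈ S :=
    forall_mem_of_map_mul_sub_mem hgen hf hx
  have triple := map_triple_mem_of_generators hgen hconj hrel htriple
  have pair_left (i : ι) : ∀ b, κ (δ (x i) * δ b) ∈ S :=
    extend _ (fun g h => by rw [map_mul_of_mul_sub_one]; exact triple _ _ _) (hpair i)
  have pair (a : G) : ∀ b, κ (δ a * δ b) ∈ S :=
    extend _ (fun g h => by rw [map_mul_of_mul_sub_one]; exact triple _ _ _)
      (fun i => by rw [hconj.map_mul_comm]; exact pair_left i a)
  have hδ (g : G) : κ (δ g) = κ (of k G g) := by rw [map_sub, ← map_one (of k G), h1, sub_zero]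
  have single : ∀ g, κ (of k G g) ∈ S :=
    extend _ (fun g h => by
      have hexp := map_mul_of_mul_sub_one (κ := κ) 1 g h
      simp only [one_mul, hδ] at hexp
      rw [hexp]
      exact pair g h) hsingle
  induction a using induction_linear with
  | zero => rw [map_zero]; exact S.zero_mem
  | add a b ha hb => rw [map_add]; exact S.add_mem ha hb
  | single g r => rw [map_single_eq_smul]; exact S.smul_mem r (single g)

end Generators

end

theorem stmt_18 {G : Type*} [Group G] {V : Type*} [AddCommGroup V] [Module ℚ V]
    (κ : MonoidAlgebra ℚ G →ₗ[ℚ] V)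
    (h1 : κ (of ℚ G 1) = 0)
    (hconj : ∀ g x : G, κ (of ℚ G (g * x * g⁻¹)) = κ (of ℚ G x))
    (hrel : ∀ x y : G, κ (of ℚ G (x * y)) + κ (of ℚ G (x * y⁻¹))
        = (2 : ℚ) • κ (of ℚ G x) + (2 : ℚ) • κ (of ℚ G y))
    (M : ℕ) (x : Fin M → G)
    (hgen : Subgroup.closure (Set.range x) = ⊤) :
    ∀ a : MonoidAlgebra ℚ G,
      κ a ∈ Submodule.span ℚ
        ((Set.range fun i => κ (of ℚ G (x i)))
          ∪ {v | ∃ i j : Fin M, i ≤ j ∧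
              v = κ ((of ℚ G (x i) - 1) * (of ℚ G (x j) - 1))}
          ∪ {v | ∃ i j k : Fin M, i < j ∧ j < k ∧
              v = κ ((of ℚ G (x i) - 1) * (of ℚ G (x j) - 1) * (of ℚ G (x k) - 1))}) := by
  have := IsAddTorsionFree.of_module_rat V
  refine map_mem_of_generators hgen h1 hconj hrel
    (fun i => Submodule.subset_span (.inl (.inl ⟨i, rfl⟩))) (fun i j => ?_)
    (fun i j l => mem_of_sorted_of_alternating
      (t := fun i j l => κ ((of ℚ G (x i) - 1) * (of ℚ G (x j) - 1) * (of ℚ G (x l) - 1)))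
      (fun _ _ _ => IsConjInvariant.map_triple_rotate hconj ..)
      (fun _ _ _ => map_triple_antisymm hconj hrel ..)
      (fun _ _ => map_triple_self_right hconj hrel ..)
      (fun i j l hij hjl => Submodule.subset_span (.inr ⟨i, j, l, hij, hjl, rfl⟩)) i j l)
  · rcases le_total i j with hij | hji
    · exact Submodule.subset_span (.inl (.inr ⟨i, j, hij, rfl⟩))
    · rw [IsConjInvariant.map_mul_comm hconj]
      exact Submodule.subset_span (.inl (.inr ⟨j, i, hji, rfl⟩))
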